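/- arXiv:2107.00428 — 3 statements merged into one kernel-verified Lean document; each statement's English description precedes it below -/
import Mathlib

section
/- Under the hypotheses of the subduced Lagrangian (D_w L ∘ h = 0 and D_y L ∘ h = 0), the following second-derivative identity holds along the horizontal manifold: ∂²L/∂vⁱ∂yᵅ ∘ h + (∂²L/∂vⁱ∂wᵝ ∘ h) ∂hᵝ/∂yᵅ = 0, and moreover ∂L̄/∂vⁱ = ∂L/∂vⁱ ∘ h and ∂L̄/∂xⁱ = ∂L/∂xⁱ ∘ h. -/
/-- Along the horizontal manifold, ∂²L/∂v∂y ∘ h + (∂²L/∂v∂w ∘ h) ∂h/∂y = 0, and the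
first derivatives of the subduced Lagrangian L̄ = L ∘ h coincide with those of L. -/
theorem stmt11 (n m : ℕ)
    (L : (Fin n → ℝ) × (Fin m → ℝ) × (Fin n → ℝ) × (Fin m → ℝ) → ℝ)
    (hL : ContDiff ℝ (⊤ : ℕ∞) L)
    (h : (Fin n → ℝ) → (Fin m → ℝ) → (Fin n → ℝ) → (Fin m → ℝ))
    (hh : ContDiff ℝ (⊤ : ℕ∞)
      (fun p : (Fin n → ℝ) × (Fin m → ℝ) × (Fin n → ℝ) => h p.1 p.2.1 p.2.2))
    (hcrit : ∀ x y v, fderiv ℝ (fun w => L (x, y, v, w)) (h x y v) = 0)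
    (hsym : ∀ x y v, fderiv ℝ (fun y' => L (x, y', v, h x y v)) y = 0) :
    ∀ x y v,
      (∀ (a : Fin m → ℝ) (e : Fin n → ℝ),
        fderiv ℝ (fun y' => fderiv ℝ (fun v' => L (x, y', v', h x y v)) v e) y a +
          fderiv ℝ (fun w' => fderiv ℝ (fun v' => L (x, y, v', w')) v e) (h x y v)
            (fderiv ℝ (fun y' => h x y' v) y a) = 0) ∧
      fderiv ℝ (fun v' => L (x, y, v', h x y v')) v =
        fderiv ℝ (fun v' => L (x, y, v', h x y v)) v ∧
      fderiv ℝ (fun x' => L (x', y, v, h x' y v)) x =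
        fderiv ℝ (fun x' => L (x', y, v, h x y v)) x := by
  have hLd : Differentiable ℝ L := hL.differentiable (by simp)
  have hhd : Differentiable ℝ
      (fun p : (Fin n → ℝ) × (Fin m → ℝ) × (Fin n → ℝ) => h p.1 p.2.1 p.2.2) :=
    hh.differentiable (by simp)
  -- differentiability of the sections of h
  have hk : ∀ x v, Differentiable ℝ (fun y' => h x y' v) := fun x v =>
    hhd.comp ((differentiable_const x).prodMk (differentiable_id.prodMk (differentiable_const v)))
  have hm : ∀ x y, Differentiable ℝ (fun v' => h x y v') := fun x y =>
    hhd.comp ((differentiable_const x).prodMk ((differentiable_const y).prodMk differentiable_id))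
  -- slot lemmas: partial derivatives of a differentiable function of all four variables
  have slotx : ∀ (f : (Fin n → ℝ) × (Fin m → ℝ) × (Fin n → ℝ) × (Fin m → ℝ) → ℝ),
      Differentiable ℝ f → ∀ x y v w (e : Fin n → ℝ),
      fderiv ℝ (fun x' => f (x', y, v, w)) x e = fderiv ℝ f (x, y, v, w) (e, 0, 0, 0) := by
    intro f hf x y v w e
    have H : HasFDerivAt (fun x' => f (x', y, v, w))
        ((fderiv ℝ f (x, y, v, w)).comp
          ((ContinuousLinearMap.id ℝ (Fin n → ℝ)).prod
            ((0 : (Fin n → ℝ) →L[ℝ] (Fin m → ℝ)).prod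
              ((0 : (Fin n → ℝ) →L[ℝ] (Fin n → ℝ)).prod
                (0 : (Fin n → ℝ) →L[ℝ] (Fin m → ℝ)))))) x :=
      (hf _).hasFDerivAt.comp x
        ((hasFDerivAt_id x).prodMk ((hasFDerivAt_const y x).prodMk
          ((hasFDerivAt_const v x).prodMk (hasFDerivAt_const w x))))
    rw [H.fderiv]; simp
  have sloty : ∀ (f : (Fin n → ℝ) × (Fin m → ℝ) × (Fin n → ℝ) × (Fin m → ℝ) → ℝ),
      Differentiable ℝ f → ∀ x y v w (a : Fin m → ℝ),
      fderiv ℝ (fun y' => f (x, y', v, w)) y a = fderiv ℝ f (x, y, v, w) (0, a, 0, 0) := by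
    intro f hf x y v w a
    have H : HasFDerivAt (fun y' => f (x, y', v, w))
        ((fderiv ℝ f (x, y, v, w)).comp
          ((0 : (Fin m → ℝ) →L[ℝ] (Fin n → ℝ)).prod
            ((ContinuousLinearMap.id ℝ (Fin m → ℝ)).prod
              ((0 : (Fin m → ℝ) →L[ℝ] (Fin n → ℝ)).prod
                (0 : (Fin m → ℝ) →L[ℝ] (Fin m → ℝ)))))) y :=
      (hf _).hasFDerivAt.comp y
        ((hasFDerivAt_const x y).prodMk ((hasFDerivAt_id y).prodMk
          ((hasFDerivAt_const v y).prodMk (hasFDerivAt_const w y))))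
    rw [H.fderiv]; simp
  have slotv : ∀ (f : (Fin n → ℝ) × (Fin m → ℝ) × (Fin n → ℝ) × (Fin m → ℝ) → ℝ),
      Differentiable ℝ f → ∀ x y v w (e : Fin n → ℝ),
      fderiv ℝ (fun v' => f (x, y, v', w)) v e = fderiv ℝ f (x, y, v, w) (0, 0, e, 0) := by
    intro f hf x y v w e
    have H : HasFDerivAt (fun v' => f (x, y, v', w))
        ((fderiv ℝ f (x, y, v, w)).comp
          ((0 : (Fin n → ℝ) →L[ℝ] (Fin n → ℝ)).prod
            ((0 : (Fin n → ℝ) →L[ℝ] (Fin m → ℝ)).prod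
              ((ContinuousLinearMap.id ℝ (Fin n → ℝ)).prod
                (0 : (Fin n → ℝ) →L[ℝ] (Fin m → ℝ)))))) v :=
      (hf _).hasFDerivAt.comp v
        ((hasFDerivAt_const x v).prodMk ((hasFDerivAt_const y v).prodMk
          ((hasFDerivAt_id v).prodMk (hasFDerivAt_const w v))))
    rw [H.fderiv]; simp
  have slotw : ∀ (f : (Fin n → ℝ) × (Fin m → ℝ) × (Fin n → ℝ) × (Fin m → ℝ) → ℝ),
      Differentiable ℝ f → ∀ x y v w (c : Fin m → ℝ),
      fderiv ℝ (fun w' => f (x, y, v, w')) w c = fderiv ℝ f (x, y, v, w) (0, 0, 0, c) := by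
    intro f hf x y v w c
    have H : HasFDerivAt (fun w' => f (x, y, v, w'))
        ((fderiv ℝ f (x, y, v, w)).comp
          ((0 : (Fin m → ℝ) →L[ℝ] (Fin n → ℝ)).prod
            ((0 : (Fin m → ℝ) →L[ℝ] (Fin m → ℝ)).prod
              ((0 : (Fin m → ℝ) →L[ℝ] (Fin n → ℝ)).prod
                (ContinuousLinearMap.id ℝ (Fin m → ℝ)))))) w :=
      (hf _).hasFDerivAt.comp w
        ((hasFDerivAt_const x w).prodMk ((hasFDerivAt_const y w).prodMk
          ((hasFDerivAt_const v w).prodMk (hasFDerivAt_id w))))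
    rw [H.fderiv]; simp
  -- Claim B: the v-derivative of the subduced Lagrangian coincides with the partial one
  have hB : ∀ x y v, fderiv ℝ (fun v' => L (x, y, v', h x y v')) v =
      fderiv ℝ (fun v' => L (x, y, v', h x y v)) v := by
    intro x y v
    have H : HasFDerivAt (fun v' => L (x, y, v', h x y v'))
        ((fderiv ℝ L (x, y, v, h x y v)).comp
          ((0 : (Fin n → ℝ) →L[ℝ] (Fin n → ℝ)).prod
            ((0 : (Fin n → ℝ) →L[ℝ] (Fin m → ℝ)).prod
              ((ContinuousLinearMap.id ℝ (Fin n → ℝ)).prod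
                (fderiv ℝ (fun v' => h x y v') v))))) v :=
      (hLd _).hasFDerivAt.comp v
        ((hasFDerivAt_const x v).prodMk ((hasFDerivAt_const y v).prodMk
          ((hasFDerivAt_id v).prodMk ((hm x y v).hasFDerivAt))))
    ext e
    rw [H.fderiv, slotv L hLd x y v (h x y v) e]
    have hsplit : ((0 : Fin n → ℝ), (0 : Fin m → ℝ), e, fderiv ℝ (fun v' => h x y v') v e)
        = ((0 : Fin n → ℝ), (0 : Fin m → ℝ), e, (0 : Fin m → ℝ))
          + ((0 : Fin n → ℝ), (0 : Fin m → ℝ), (0 : Fin n → ℝ),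
              fderiv ℝ (fun v' => h x y v') v e) := by
      simp [Prod.ext_iff]
    have hzero : fderiv ℝ L (x, y, v, h x y v)
        ((0 : Fin n → ℝ), (0 : Fin m → ℝ), (0 : Fin n → ℝ),
          fderiv ℝ (fun v' => h x y v') v e) = 0 := by
      rw [← slotw L hLd x y v (h x y v) _, hcrit x y v]; rfl
    simp only [ContinuousLinearMap.comp_apply, ContinuousLinearMap.prod_apply,
      ContinuousLinearMap.zero_apply, ContinuousLinearMap.id_apply, ContinuousLinearMap.coe_id']
    rw [hsplit, map_add, hzero, add_zero]
  -- Claim X: same for the x-derivative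
  have hX : ∀ x y v, fderiv ℝ (fun x' => L (x', y, v, h x' y v)) x =
      fderiv ℝ (fun x' => L (x', y, v, h x y v)) x := by
    intro x y v
    have hmx : Differentiable ℝ (fun x' => h x' y v) :=
      hhd.comp (differentiable_id.prodMk ((differentiable_const y).prodMk (differentiable_const v)))
    have H : HasFDerivAt (fun x' => L (x', y, v, h x' y v))
        ((fderiv ℝ L (x, y, v, h x y v)).comp
          ((ContinuousLinearMap.id ℝ (Fin n → ℝ)).prod
            ((0 : (Fin n → ℝ) →L[ℝ] (Fin m → ℝ)).prod
              ((0 : (Fin n → ℝ) →L[ℝ] (Fin n → ℝ)).prod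
                (fderiv ℝ (fun x' => h x' y v) x))))) x :=
      (hLd _).hasFDerivAt.comp x
        ((hasFDerivAt_id x).prodMk ((hasFDerivAt_const y x).prodMk
          ((hasFDerivAt_const v x).prodMk ((hmx x).hasFDerivAt))))
    ext e
    rw [H.fderiv, slotx L hLd x y v (h x y v) e]
    have hsplit : (e, (0 : Fin m → ℝ), (0 : Fin n → ℝ), fderiv ℝ (fun x' => h x' y v) x e)
        = (e, (0 : Fin m → ℝ), (0 : Fin n → ℝ), (0 : Fin m → ℝ))
          + ((0 : Fin n → ℝ), (0 : Fin m → ℝ), (0 : Fin n → ℝ),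
              fderiv ℝ (fun x' => h x' y v) x e) := by
      simp [Prod.ext_iff]
    have hzero : fderiv ℝ L (x, y, v, h x y v)
        ((0 : Fin n → ℝ), (0 : Fin m → ℝ), (0 : Fin n → ℝ),
          fderiv ℝ (fun x' => h x' y v) x e) = 0 := by
      rw [← slotw L hLd x y v (h x y v) _, hcrit x y v]; rfl
    simp only [ContinuousLinearMap.comp_apply, ContinuousLinearMap.prod_apply,
      ContinuousLinearMap.zero_apply, ContinuousLinearMap.id_apply, ContinuousLinearMap.coe_id']
    rw [hsplit, map_add, hzero, add_zero]
  -- Claim C: the subduced Lagrangian is independent of y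
  have hC : ∀ x v' y₁ y₂, L (x, y₁, v', h x y₁ v') = L (x, y₂, v', h x y₂ v') := by
    intro x v' y₁ y₂
    have hdiff : Differentiable ℝ (fun t => L (x, t, v', h x t v')) := by
      apply hLd.comp
      exact (differentiable_const x).prodMk (differentiable_id.prodMk
        ((differentiable_const v').prodMk (hk x v')))
    have hz : ∀ y'', fderiv ℝ (fun t => L (x, t, v', h x t v')) y'' = 0 := by
      intro y''
      have H : HasFDerivAt (fun t => L (x, t, v', h x t v'))
          ((fderiv ℝ L (x, y'', v', h x y'' v')).comp
            ((0 : (Fin m → ℝ) →L[ℝ] (Fin n → ℝ)).prod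
              ((ContinuousLinearMap.id ℝ (Fin m → ℝ)).prod
                ((0 : (Fin m → ℝ) →L[ℝ] (Fin n → ℝ)).prod
                  (fderiv ℝ (fun t => h x t v') y''))))) y'' :=
        (hLd _).hasFDerivAt.comp y''
          ((hasFDerivAt_const x y'').prodMk ((hasFDerivAt_id y'').prodMk
            ((hasFDerivAt_const v' y'').prodMk ((hk x v' y'').hasFDerivAt))))
      rw [H.fderiv]
      ext a
      have hsplit : ((0 : Fin n → ℝ), a, (0 : Fin n → ℝ), fderiv ℝ (fun t => h x t v') y'' a)
          = ((0 : Fin n → ℝ), a, (0 : Fin n → ℝ), (0 : Fin m → ℝ))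
            + ((0 : Fin n → ℝ), (0 : Fin m → ℝ), (0 : Fin n → ℝ),
                fderiv ℝ (fun t => h x t v') y'' a) := by
        simp [Prod.ext_iff]
      have hz1 : fderiv ℝ L (x, y'', v', h x y'' v')
          ((0 : Fin n → ℝ), a, (0 : Fin n → ℝ), (0 : Fin m → ℝ)) = 0 := by
        rw [← sloty L hLd x y'' v' (h x y'' v') a, hsym x y'' v']; rfl
      have hz2 : fderiv ℝ L (x, y'', v', h x y'' v')
          ((0 : Fin n → ℝ), (0 : Fin m → ℝ), (0 : Fin n → ℝ),
            fderiv ℝ (fun t => h x t v') y'' a) = 0 := by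
        rw [← slotw L hLd x y'' v' (h x y'' v') _, hcrit x y'' v']; rfl
      simp only [ContinuousLinearMap.comp_apply, ContinuousLinearMap.prod_apply,
        ContinuousLinearMap.zero_apply, ContinuousLinearMap.id_apply,
        ContinuousLinearMap.coe_id', ContinuousLinearMap.zero_apply]
      rw [hsplit, map_add, hz1, hz2, add_zero]
    exact is_const_of_fderiv_eq_zero hdiff hz y₁ y₂
  intro x y v
  refine ⟨?_, hB x y v, hX x y v⟩
  intro a e
  -- Ψ q = fderiv L q (0,0,e,0)
  set u : (Fin n → ℝ) × (Fin m → ℝ) × (Fin n → ℝ) × (Fin m → ℝ) :=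
    ((0 : Fin n → ℝ), (0 : Fin m → ℝ), e, (0 : Fin m → ℝ)) with hu
  have hDL : ContDiff ℝ (⊤ : ℕ∞) (fderiv ℝ L) := hL.fderiv_right (by simp)
  have hΨ : Differentiable ℝ (fun q => fderiv ℝ L q u) :=
    (hDL.clm_apply contDiff_const).differentiable (by simp)
  have r1 : (fun y' => fderiv ℝ (fun v' => L (x, y', v', h x y v)) v e)
      = fun y' => fderiv ℝ L (x, y', v, h x y v) u :=
    funext fun y' => slotv L hLd x y' v (h x y v) e
  have r2 : (fun w' => fderiv ℝ (fun v' => L (x, y, v', w')) v e)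
      = fun w' => fderiv ℝ L (x, y, v, w') u :=
    funext fun w' => slotv L hLd x y v w' e
  rw [r1, r2]
  rw [sloty _ hΨ x y v (h x y v) a, slotw _ hΨ x y v (h x y v) _]
  -- the composed map y' ↦ Ψ (x, y', v, h x y' v) is constant
  have hconst : (fun y' => fderiv ℝ L (x, y', v, h x y' v) u)
      = fun _ => fderiv ℝ L (x, y, v, h x y v) u := by
    funext y'
    rw [← slotv L hLd x y' v (h x y' v) e, ← slotv L hLd x y v (h x y v) e,
      ← hB x y' v, ← hB x y v]
    have : (fun v' => L (x, y', v', h x y' v')) = fun v' => L (x, y, v', h x y v') :=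
      funext fun v' => hC x v' y' y
    rw [this]
  have H : HasFDerivAt (fun y' => fderiv ℝ L (x, y', v, h x y' v) u)
      ((fderiv ℝ (fun q => fderiv ℝ L q u) (x, y, v, h x y v)).comp
        ((0 : (Fin m → ℝ) →L[ℝ] (Fin n → ℝ)).prod
          ((ContinuousLinearMap.id ℝ (Fin m → ℝ)).prod
            ((0 : (Fin m → ℝ) →L[ℝ] (Fin n → ℝ)).prod
              (fderiv ℝ (fun y' => h x y' v) y))))) y :=
    (hΨ _).hasFDerivAt.comp y
      ((hasFDerivAt_const x y).prodMk ((hasFDerivAt_id y).prodMk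
        ((hasFDerivAt_const v y).prodMk ((hk x v y).hasFDerivAt))))
  have e1 : ((fderiv ℝ (fun q => fderiv ℝ L q u) (x, y, v, h x y v)).comp
      ((0 : (Fin m → ℝ) →L[ℝ] (Fin n → ℝ)).prod
        ((ContinuousLinearMap.id ℝ (Fin m → ℝ)).prod
          ((0 : (Fin m → ℝ) →L[ℝ] (Fin n → ℝ)).prod
            (fderiv ℝ (fun y' => h x y' v) y))))) = 0 := by
    rw [← H.fderiv, hconst]
    exact fderiv_const_apply _
  have e2 := ContinuousLinearMap.ext_iff.mp e1 a
  simp only [ContinuousLinearMap.comp_apply, ContinuousLinearMap.prod_apply,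
    ContinuousLinearMap.zero_apply, ContinuousLinearMap.id_apply,
    ContinuousLinearMap.coe_id'] at e2
  rw [← map_add]
  have hsplit : ((0 : Fin n → ℝ), a, (0 : Fin n → ℝ), (0 : Fin m → ℝ))
      + ((0 : Fin n → ℝ), (0 : Fin m → ℝ), (0 : Fin n → ℝ),
          fderiv ℝ (fun y' => h x y' v) y a)
      = ((0 : Fin n → ℝ), a, (0 : Fin n → ℝ), fderiv ℝ (fun y' => h x y' v) y a) := by
    simp [Prod.ext_iff]
  rw [hsplit]
  exact e2
end

section
/- Let L be a smooth fibre-regular Lagrangian with induced splitting h satisfying the symmetry condition D_y L ∘ h = 0, and let (x(t), y(t)) be a curve with ẏ(t) = h(x(t), y(t), ẋ(t)) satisfying the Euler–Lagrange equations d/dt(∂L/∂uᵃ) − ∂L/∂qᵃ = 0 along (x, y, ẋ, ẏ). Then x(t) satisfies the Euler–Lagrange equations of the subduced Lagrangian L̄(x, v) = L(x, y, v, h(x,y,v)): d/dt(∂L̄/∂vⁱ) − ∂L̄/∂xⁱ = 0. -/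
open ContinuousLinearMap

section Aux

variable {P Q : Type*} [NormedAddCommGroup P] [NormedSpace ℝ P]
  [NormedAddCommGroup Q] [NormedSpace ℝ Q]

/-- Injection into the first factor. -/
noncomputable def e1 : P →L[ℝ] P × Q × P × Q :=
  (ContinuousLinearMap.id ℝ P).prod 0

/-- Injection into the third factor. -/
noncomputable def e3 : P →L[ℝ] P × Q × P × Q :=
  (0 : P →L[ℝ] P).prod ((0 : P →L[ℝ] Q).prod ((ContinuousLinearMap.id ℝ P).prod 0))

/-- Injection into the fourth factor. -/
noncomputable def e4 : Q →L[ℝ] P × Q × P × Q :=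
  (0 : Q →L[ℝ] P).prod ((0 : Q →L[ℝ] Q).prod ((0 : Q →L[ℝ] P).prod (ContinuousLinearMap.id ℝ Q)))

/-- Injection into the last two factors. -/
noncomputable def e34 : (P × Q) →L[ℝ] P × Q × P × Q :=
  (0 : (P × Q) →L[ℝ] P).prod ((0 : (P × Q) →L[ℝ] Q).prod (ContinuousLinearMap.id ℝ (P × Q)))

/-- Injection into the first two factors. -/
noncomputable def e12 : (P × Q) →L[ℝ] P × Q × P × Q :=
  (ContinuousLinearMap.fst ℝ P Q).prod ((ContinuousLinearMap.snd ℝ P Q).prod 0)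

@[simp] lemma e1_apply (v : P) : (e1 v : P × Q × P × Q) = (v, 0, 0, 0) := rfl
@[simp] lemma e3_apply (v : P) : (e3 v : P × Q × P × Q) = (0, 0, v, 0) := rfl
@[simp] lemma e4_apply (w : Q) : (e4 w : P × Q × P × Q) = (0, 0, 0, w) := rfl
@[simp] lemma e34_apply (vw : P × Q) : (e34 vw : P × Q × P × Q) = (0, 0, vw) := rfl
@[simp] lemma e12_apply (xy : P × Q) : (e12 xy : P × Q × P × Q) = (xy.1, xy.2, 0, 0) :=
  rfl

variable {L : P × Q × P × Q → ℝ}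

lemma fderiv_partial4 (hL : Differentiable ℝ L) (x : P) (y : Q) (u : P) (w : Q) :
    fderiv ℝ (fun w' => L (x, y, u, w')) w = (fderiv ℝ L (x, y, u, w)).comp e4 := by
  have h1 : HasFDerivAt (fun w' : Q => ((x, y, u, w') : P × Q × P × Q)) e4 w :=
    (hasFDerivAt_const x w).prodMk ((hasFDerivAt_const y w).prodMk
      ((hasFDerivAt_const u w).prodMk (hasFDerivAt_id w)))
  exact ((hL (x, y, u, w)).hasFDerivAt.comp w h1).fderiv

lemma fderiv_partial34 (hL : Differentiable ℝ L) (x : P) (y : Q) (u : P) (w : Q) :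
    fderiv ℝ (fun uv : P × Q => L (x, y, uv.1, uv.2)) (u, w) =
      (fderiv ℝ L (x, y, u, w)).comp e34 := by
  have h1 : HasFDerivAt (fun uv : P × Q => ((x, y, uv.1, uv.2) : P × Q × P × Q)) e34 (u, w) :=
    (hasFDerivAt_const x (u, w)).prodMk ((hasFDerivAt_const y (u, w)).prodMk (hasFDerivAt_id (u, w)))
  exact ((hL (x, y, u, w)).hasFDerivAt.comp (u, w) h1).fderiv

lemma fderiv_partial12 (hL : Differentiable ℝ L) (x : P) (y : Q) (u : P) (w : Q) :
    fderiv ℝ (fun q : P × Q => L (q.1, q.2, u, w)) (x, y) =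
      (fderiv ℝ L (x, y, u, w)).comp e12 := by
  have h1 : HasFDerivAt (fun q : P × Q => ((q.1, q.2, u, w) : P × Q × P × Q)) e12 (x, y) :=
    (hasFDerivAt_fst).prodMk ((hasFDerivAt_snd).prodMk (hasFDerivAt_const (u, w) (x, y)))
  exact ((hL (x, y, u, w)).hasFDerivAt.comp (x, y) h1).fderiv

lemma fderiv_comp_h3 (hL : Differentiable ℝ L) (x : P) (y : Q) {k : P → Q} {B : P →L[ℝ] Q}
    {u : P} (hk : HasFDerivAt k B u)
    (hzero : (fderiv ℝ L (x, y, u, k u)).comp e4 = 0) :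
    fderiv ℝ (fun v => L (x, y, v, k v)) u = (fderiv ℝ L (x, y, u, k u)).comp e3 := by
  have h1 : HasFDerivAt (fun v : P => ((x, y, v, k v) : P × Q × P × Q)) (e3 + e4.comp B) u := by
    have h2 := (hasFDerivAt_const x u).prodMk ((hasFDerivAt_const y u).prodMk
      ((hasFDerivAt_id u).prodMk hk))
    convert h2 using 1
    all_goals ext v <;>
      simp [e3, e4, ContinuousLinearMap.prod_apply]
  have h3 := ((hL (x, y, u, k u)).hasFDerivAt.comp u h1).fderiv
  rw [ContinuousLinearMap.comp_add, ← ContinuousLinearMap.comp_assoc, hzero,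
    ContinuousLinearMap.zero_comp, add_zero] at h3
  exact h3

lemma fderiv_comp_h1 (hL : Differentiable ℝ L) (y : Q) (v : P) {k : P → Q} {C : P →L[ℝ] Q}
    {x : P} (hk : HasFDerivAt k C x)
    (hzero : (fderiv ℝ L (x, y, v, k x)).comp e4 = 0) :
    fderiv ℝ (fun q => L (q, y, v, k q)) x = (fderiv ℝ L (x, y, v, k x)).comp e1 := by
  have h1 : HasFDerivAt (fun q : P => ((q, y, v, k q) : P × Q × P × Q)) (e1 + e4.comp C) x := by
    have h2 := (hasFDerivAt_id x).prodMk ((hasFDerivAt_const y x).prodMk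
      ((hasFDerivAt_const v x).prodMk hk))
    convert h2 using 1
    all_goals ext q <;>
      simp [e1, e4, ContinuousLinearMap.prod_apply]
  have h3 := ((hL (x, y, v, k x)).hasFDerivAt.comp x h1).fderiv
  rw [ContinuousLinearMap.comp_add, ← ContinuousLinearMap.comp_assoc, hzero,
    ContinuousLinearMap.zero_comp, add_zero] at h3
  exact h3

lemma deriv_clm_comp_const {W E' : Type*} [NormedAddCommGroup W] [NormedSpace ℝ W]
    [NormedAddCommGroup E'] [NormedSpace ℝ E'] {A : ℝ → E' →L[ℝ] ℝ}
    (hA : Differentiable ℝ A) (c : W →L[ℝ] E') (t : ℝ) :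
    deriv (fun s => (A s).comp c) t = (deriv A t).comp c := by
  have h1 : HasDerivAt A (deriv A t) t := (hA t).hasDerivAt
  have h2 := h1.clm_comp (hasDerivAt_const t c)
  simpa using h2.deriv

end Aux

/-- Horizontal Euler–Lagrange solutions of a fibre-regular Lagrangian satisfying the
symmetry condition project to Euler–Lagrange solutions of the subduced Lagrangian. -/
theorem stmt12 (n m : ℕ)
    (L : (Fin n → ℝ) × (Fin m → ℝ) × (Fin n → ℝ) × (Fin m → ℝ) → ℝ)
    (hL : ContDiff ℝ (⊤ : ℕ∞) L)
    (h : (Fin n → ℝ) → (Fin m → ℝ) → (Fin n → ℝ) → (Fin m → ℝ))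
    (hh : ContDiff ℝ (⊤ : ℕ∞)
      (fun p : (Fin n → ℝ) × (Fin m → ℝ) × (Fin n → ℝ) => h p.1 p.2.1 p.2.2))
    (hcrit : ∀ x y v, fderiv ℝ (fun w => L (x, y, v, w)) (h x y v) = 0)
    (hsym : ∀ x y v, fderiv ℝ (fun y' => L (x, y', v, h x y v)) y = 0)
    (Lbar : (Fin n → ℝ) × (Fin n → ℝ) → ℝ)
    (hLbar : ∀ x y v, Lbar (x, v) = L (x, y, v, h x y v))
    (x : ℝ → Fin n → ℝ) (y : ℝ → Fin m → ℝ)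
    (hx : ContDiff ℝ (⊤ : ℕ∞) x) (hy : ContDiff ℝ (⊤ : ℕ∞) y)
    (hhoriz : ∀ t, deriv y t = h (x t) (y t) (deriv x t))
    (hEL : ∀ t,
      deriv (fun s =>
          fderiv ℝ (fun uv : (Fin n → ℝ) × (Fin m → ℝ) => L (x s, y s, uv.1, uv.2))
            (deriv x s, deriv y s)) t =
        fderiv ℝ (fun q : (Fin n → ℝ) × (Fin m → ℝ) => L (q.1, q.2, deriv x t, deriv y t))
          (x t, y t)) :
    ∀ t,
      deriv (fun s => fderiv ℝ (fun v => Lbar (x s, v)) (deriv x s)) t =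
        fderiv ℝ (fun q => Lbar (q, deriv x t)) (x t) := by
  intro t
  have hLd : Differentiable ℝ L := hL.differentiable (by simp)
  have hhd : Differentiable ℝ (fun p : (Fin n → ℝ) × (Fin m → ℝ) × (Fin n → ℝ) =>
      h p.1 p.2.1 p.2.2) := hh.differentiable (by simp)
  -- differentiability of slices of h
  have hkv : ∀ (a : Fin n → ℝ) (b : Fin m → ℝ), Differentiable ℝ (fun v => h a b v) :=
    fun a b => hhd.comp ((differentiable_const a).prodMk
      ((differentiable_const b).prodMk differentiable_id))
  have hkq : ∀ (b : Fin m → ℝ) (v : Fin n → ℝ), Differentiable ℝ (fun q => h q b v) :=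
    fun b v => hhd.comp (differentiable_id.prodMk (differentiable_const (b, v)))
  -- the full derivative of L along the lifted curve
  set A : ℝ → ((Fin n → ℝ) × (Fin m → ℝ) × (Fin n → ℝ) × (Fin m → ℝ)) →L[ℝ] ℝ :=
    fun s => fderiv ℝ L (x s, y s, deriv x s, deriv y s) with hAdef
  -- fibre criticality along the curve
  have hz : ∀ s, (A s).comp e4 = 0 := by
    intro s
    have h4 := fderiv_partial4 hLd (x s) (y s) (deriv x s) (deriv y s)
    rw [hAdef]
    rw [← h4, hhoriz s, hcrit]
  -- the v-partial derivative of Lbar along the curve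
  have keyL : ∀ s, fderiv ℝ (fun v => Lbar (x s, v)) (deriv x s) = (A s).comp e3 := by
    intro s
    have hrw : (fun v => Lbar (x s, v)) =
        fun v => L (x s, y s, v, h (x s) (y s) v) := funext fun v => hLbar _ _ _
    rw [hrw]
    have hk : HasFDerivAt (fun v => h (x s) (y s) v)
        (fderiv ℝ (fun v => h (x s) (y s) v) (deriv x s)) (deriv x s) :=
      (hkv (x s) (y s) (deriv x s)).hasFDerivAt
    have hzero : (fderiv ℝ L (x s, y s, deriv x s, h (x s) (y s) (deriv x s))).comp e4 = 0 := by
      rw [← hhoriz s]; exact hz s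
    have := fderiv_comp_h3 hLd (x s) (y s) hk hzero
    rw [this, ← hhoriz s]
  -- the x-partial derivative of Lbar at time t
  have key2 : fderiv ℝ (fun q => Lbar (q, deriv x t)) (x t) = (A t).comp e1 := by
    have hrw : (fun q => Lbar (q, deriv x t)) =
        fun q => L (q, y t, deriv x t, h q (y t) (deriv x t)) := funext fun q => hLbar _ _ _
    rw [hrw]
    have hk : HasFDerivAt (fun q => h q (y t) (deriv x t))
        (fderiv ℝ (fun q => h q (y t) (deriv x t)) (x t)) (x t) :=
      (hkq (y t) (deriv x t) (x t)).hasFDerivAt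
    have hzero : (fderiv ℝ L (x t, y t, deriv x t, h (x t) (y t) (deriv x t))).comp e4 = 0 := by
      rw [← hhoriz t]; exact hz t
    have := fderiv_comp_h1 hLd (y t) (deriv x t) hk hzero
    rw [this, ← hhoriz t]
  -- the uv-partial derivative of L along the curve
  have keyEL : ∀ s, fderiv ℝ (fun uv : (Fin n → ℝ) × (Fin m → ℝ) =>
      L (x s, y s, uv.1, uv.2)) (deriv x s, deriv y s) = (A s).comp e34 :=
    fun s => fderiv_partial34 hLd (x s) (y s) (deriv x s) (deriv y s)
  -- differentiability of A
  have hxd : Differentiable ℝ x := hx.differentiable (by simp)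
  have hyd : Differentiable ℝ y := hy.differentiable (by simp)
  have hdx : Differentiable ℝ (deriv x) :=
    ((contDiff_infty_iff_deriv.mp (hx.of_le (by simp))).2).differentiable (by simp)
  have hdy : Differentiable ℝ (deriv y) :=
    ((contDiff_infty_iff_deriv.mp (hy.of_le (by simp))).2).differentiable (by simp)
  have hγ : Differentiable ℝ (fun s => ((x s, y s, deriv x s, deriv y s) :
      (Fin n → ℝ) × (Fin m → ℝ) × (Fin n → ℝ) × (Fin m → ℝ))) :=
    hxd.prodMk (hyd.prodMk (hdx.prodMk hdy))
  have hfd : Differentiable ℝ (fderiv ℝ L) := (hL.fderiv_right (m := 1) (WithTop.coe_le_coe.mpr le_top)).differentiable (by simp)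
  have hA : Differentiable ℝ A := hfd.comp hγ
  -- the Euler–Lagrange equation in terms of A
  have hR := hEL t
  simp only [keyEL] at hR
  rw [deriv_clm_comp_const hA e34 t, fderiv_partial12 hLd (x t) (y t) (deriv x t) (deriv y t)]
    at hR
  -- hR : (deriv A t).comp e34 = (A t).comp e12
  simp only [keyL]
  rw [deriv_clm_comp_const hA e3 t, key2]
  ext v
  have := congrArg (fun T : ((Fin n → ℝ) × (Fin m → ℝ)) →L[ℝ] ℝ => T (v, 0)) hR
  simpa using this
end

section
/- If L : ℝⁿ × ℝᵐ × ℝⁿ × ℝᵐ → ℝ is fibre-regular, positively homogeneous of degree 2 in the velocities (L(x,y,λv,λw) = λ²L(x,y,v,w) for λ > 0), and h is its induced nonlinear splitting (D_w L(x,y,v,h(x,y,v)) = 0 with locally unique solution), then h is positively homogeneous of degree 1 in v: h(x,y,λv) = λ h(x,y,v) for λ > 0. -/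
/-- The nonlinear splitting induced by a 2⁺-homogeneous fibre-regular Lagrangian is
positively 1-homogeneous in v. -/
theorem stmt17 (n m : ℕ)
    (L : (Fin n → ℝ) × (Fin m → ℝ) × (Fin n → ℝ) × (Fin m → ℝ) → ℝ)
    (hL : ContDiff ℝ (⊤ : ℕ∞) L)
    (hhomL : ∀ x y (v : Fin n → ℝ) (w : Fin m → ℝ) (l : ℝ), 0 < l →
      L (x, y, l • v, l • w) = l ^ 2 * L (x, y, v, w))
    (h : (Fin n → ℝ) → (Fin m → ℝ) → (Fin n → ℝ) → (Fin m → ℝ))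
    (hcrit : ∀ x y v, fderiv ℝ (fun w => L (x, y, v, w)) (h x y v) = 0)
    (huniq : ∀ x y v w, fderiv ℝ (fun w' => L (x, y, v, w')) w = 0 → w = h x y v) :
    ∀ x y v (l : ℝ), 0 < l → h x y (l • v) = l • h x y v := by
  intro x y v l hl
  have hl0 : l ≠ 0 := ne_of_gt hl
  have hdL : Differentiable ℝ L := hL.differentiable (by simp)
  set f : (Fin m → ℝ) → ℝ := fun w' => L (x, y, l • v, w') with hfdef
  have hdf : Differentiable ℝ f := by
    apply hdL.comp
    fun_prop
  set e : (Fin m → ℝ) →L[ℝ] (Fin m → ℝ) :=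
    l • ContinuousLinearMap.id ℝ (Fin m → ℝ) with hedef
  have he : ∀ w, e w = l • w := fun w => rfl
  have hcomp : (fun w => f (e w)) = fun w => l ^ 2 * L (x, y, v, w) := by
    funext w
    simp only [he, hfdef]
    exact hhomL x y v w l hl
  have h1 : fderiv ℝ (fun w => f (e w)) (h x y v)
      = (fderiv ℝ f (e (h x y v))).comp e := by
    have := fderiv_comp (h x y v) (hdf (e (h x y v))) e.differentiableAt
    rw [e.fderiv] at this
    exact this
  have h2 : fderiv ℝ (fun w => l ^ 2 * L (x, y, v, w)) (h x y v) = 0 := by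
    have hd : DifferentiableAt ℝ (fun w => L (x, y, v, w)) (h x y v) := by
      apply hdL.comp
      fun_prop
    rw [fderiv_const_mul hd, hcrit x y v, smul_zero]
  have h3 : (fderiv ℝ f (l • h x y v)).comp e = 0 := by
    rw [← he (h x y v)]
    rw [← h1, hcomp, h2]
  have h4 : fderiv ℝ f (l • h x y v) = 0 := by
    ext u
    have := congrArg (fun T => (T : (Fin m → ℝ) →L[ℝ] ℝ) (l⁻¹ • u)) h3
    simpa [he, smul_smul, hl0] using this
  exact (huniq x y (l • v) (l • h x y v) h4).symm
end
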